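/- arXiv:1006.2020 — 3 statements merged into one kernel-verified Lean document; each statement's English description precedes it below -/
import Mathlib

section
/- Let φ: ℝ² → ℝ be C¹ and strictly star-shaped, i.e. x·φ_x(x,y) + y·φ_y(x,y) > 0 for all (x,y) ≠ (0,0). Define A(x,y) = x² + y² + x·y·φ(x,y). Then the gradient of A does not vanish at any point of the set {(x,y) ≠ (0,0) : A(x,y) = 0}. -/
/-!
Euler's identity for the radial derivative: with `A = x² + y² + x y φ`,
`dA(p) p = 2 A(p) + x y · dφ(p) p`. At a zero `p ≠ 0` of `A` both coordinates are nonzero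
(otherwise `x² + y² = 0`), and star-shapedness makes `dφ(p) p > 0`, so `dA(p) p ≠ 0`.
-/

theorem ContinuousLinearMap.apply_eq_fst_smul_add_snd_smul {M : Type*} [AddCommGroup M]
    [Module ℝ M] [TopologicalSpace M] (L : ℝ × ℝ →L[ℝ] M) (p : ℝ × ℝ) :
    L p = p.1 • L (1, 0) + p.2 • L (0, 1) := by
  have hp : p = p.1 • ((1 : ℝ), (0 : ℝ)) + p.2 • ((0 : ℝ), (1 : ℝ)) := by ext <;> simp
  conv_lhs => rw [hp, map_add, map_smul, map_smul]

theorem fderiv_sq_add_sq_add_mul_mul_apply_self {φ : ℝ × ℝ → ℝ} {p : ℝ × ℝ}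
    (hφ : DifferentiableAt ℝ φ p) :
    fderiv ℝ (fun q : ℝ × ℝ => q.1 ^ 2 + q.2 ^ 2 + q.1 * q.2 * φ q) p p =
      2 * (p.1 ^ 2 + p.2 ^ 2 + p.1 * p.2 * φ p) + p.1 * p.2 * fderiv ℝ φ p p := by
  have hA : HasFDerivAt (fun q : ℝ × ℝ => q.1 ^ 2 + q.2 ^ 2 + q.1 * q.2 * φ q) _ p :=
    ((hasFDerivAt_fst.pow 2).add (hasFDerivAt_snd.pow 2)).add
      ((hasFDerivAt_fst.mul hasFDerivAt_snd).mul hφ.hasFDerivAt)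
  rw [hA.fderiv]
  simp only [Nat.add_one_sub_one, pow_one, nsmul_eq_mul, Nat.cast_ofNat, Pi.mul_apply, smul_add,
    add_apply, smul_apply, ContinuousLinearMap.coe_fst', ContinuousLinearMap.coe_snd', smul_eq_mul]
  ring

theorem fst_mul_snd_ne_zero_of_sq_add_sq_add_mul_eq_zero {p : ℝ × ℝ} {c : ℝ} (hp : p ≠ 0)
    (h : p.1 ^ 2 + p.2 ^ 2 + p.1 * p.2 * c = 0) : p.1 * p.2 ≠ 0 := by
  intro hxy
  have : p.1 ^ 2 + p.2 ^ 2 = 0 := by rw [hxy, zero_mul, add_zero] at h; exact h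
  rw [add_eq_zero_iff_of_nonneg (sq_nonneg _) (sq_nonneg _), sq_eq_zero_iff, sq_eq_zero_iff] at this
  exact hp (Prod.ext this.1 this.2)

theorem grad_A_nonvanishing
    (φ : ℝ × ℝ → ℝ) (hφ : ContDiff ℝ 1 φ)
    (hstar : ∀ p : ℝ × ℝ, p ≠ 0 →
      p.1 * fderiv ℝ φ p (1, 0) + p.2 * fderiv ℝ φ p (0, 1) > 0)
    (A : ℝ × ℝ → ℝ)
    (hA : ∀ p : ℝ × ℝ, A p = p.1 ^ 2 + p.2 ^ 2 + p.1 * p.2 * φ p) :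
    ∀ p : ℝ × ℝ, p ≠ 0 → A p = 0 → fderiv ℝ A p ≠ 0 := by
  intro p hp hAp hdA
  rw [hA] at hAp
  obtain rfl : A = fun q => q.1 ^ 2 + q.2 ^ 2 + q.1 * q.2 * φ q := funext hA
  have hEuler := fderiv_sq_add_sq_add_mul_mul_apply_self (hφ.differentiable one_ne_zero p)
  rw [hdA, hAp, (fderiv ℝ φ p).apply_eq_fst_smul_add_snd_smul] at hEuler
  simp only [zero_apply, smul_eq_mul, mul_zero, zero_add] at hEuler
  exact mul_ne_zero (fst_mul_snd_ne_zero_of_sq_add_sq_add_mul_eq_zero hp hAp) (hstar p hp).ne'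
    hEuler.symm
end

section
/- Let φ: ℝ² → ℝ be C¹ with x·φ_x + y·φ_y > 0 for (x,y) ≠ (0,0), and A(x,y) = x² + y² + x·y·φ(x,y). If (x*,y*) satisfies x* > 0, y* < 0 and A(x*,y*) < 0, then the function r ↦ A(r x*, r y*) is strictly decreasing on [1,∞). -/
/-!
Write `A (r • p) = r ^ 2 * B r` with `B r = x ^ 2 + y ^ 2 + x * y * φ (r • p)`, `p = (x, y)`.
The hypothesis on `φ` says that its radial derivative is positive, so `r ↦ φ (r • p)` is
strictly increasing on `r > 0`; since `x * y < 0`, `B` is strictly decreasing, hence stays below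
`B 1 = A p < 0` for `r ≥ 1`. A negative, strictly decreasing factor times the increasing factor
`r ^ 2` is strictly decreasing.
-/

open Set

section Radial

variable {E : Type*} [NormedAddCommGroup E] [NormedSpace ℝ E]

theorem differentiableAt_of_fderiv_apply_ne_zero {F : Type*} [NormedAddCommGroup F]
    [NormedSpace ℝ F] {f : E → F} {p v : E} (h : fderiv ℝ f p v ≠ 0) :
    DifferentiableAt ℝ f p := by
  by_contra hf
  simp [fderiv_zero_of_not_differentiableAt hf] at h

theorem hasDerivAt_comp_smul {F : Type*} [NormedAddCommGroup F] [NormedSpace ℝ F]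
    {f : E → F} {v : E} {r : ℝ} (hf : DifferentiableAt ℝ f (r • v)) :
    HasDerivAt (fun s : ℝ => f (s • v)) (fderiv ℝ f (r • v) v) r := by
  have hline : HasDerivAt (fun s : ℝ => s • v) v r := by
    simpa using (hasDerivAt_id r).smul_const v
  exact hf.hasFDerivAt.comp_hasDerivAt r hline

theorem strictMonoOn_comp_smul_of_radial_fderiv_pos {f : E → ℝ} {v : E}
    (hf : ∀ r : ℝ, 0 < r → 0 < fderiv ℝ f (r • v) (r • v)) :
    StrictMonoOn (fun r : ℝ => f (r • v)) (Ioi 0) := by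
  have hderiv : ∀ r : ℝ, 0 < r → HasDerivAt (fun s : ℝ => f (s • v)) (fderiv ℝ f (r • v) v) r :=
    fun r hr => hasDerivAt_comp_smul (differentiableAt_of_fderiv_apply_ne_zero (hf r hr).ne')
  refine strictMonoOn_of_deriv_pos (convex_Ioi 0)
    (fun r hr => (hderiv r hr).continuousAt.continuousWithinAt) fun r hr => ?_
  rw [interior_Ioi] at hr
  have hpos := hf r hr
  rw [map_smul, smul_eq_mul] at hpos
  rw [(hderiv r hr).deriv]
  exact pos_of_mul_pos_right hpos hr.le

end Radial

theorem ContinuousLinearMap.apply_eq_fst_mul_add_snd_mul (L : ℝ × ℝ →L[ℝ] ℝ) (p : ℝ × ℝ) :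
    L p = p.1 * L (1, 0) + p.2 * L (0, 1) := by
  conv_lhs => rw [show p = p.1 • ((1 : ℝ), (0 : ℝ)) + p.2 • ((0 : ℝ), (1 : ℝ)) by simp]
  rw [map_add, map_smul, map_smul, smul_eq_mul, smul_eq_mul]

theorem StrictAntiOn.sq_mul_of_nonpos {s : Set ℝ} {B : ℝ → ℝ} (hB : StrictAntiOn B s)
    (hB0 : ∀ r ∈ s, B r ≤ 0) (hs : ∀ r ∈ s, 0 ≤ r) :
    StrictAntiOn (fun r => r ^ 2 * B r) s := by
  intro a ha b hb hab
  have hb0 : 0 < b := (hs a ha).trans_lt hab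
  calc b ^ 2 * B b < b ^ 2 * B a := mul_lt_mul_of_pos_left (hB ha hb hab) (by positivity)
    _ ≤ a ^ 2 * B a := mul_le_mul_of_nonpos_right (by nlinarith [hs a ha]) (hB0 a ha)

theorem A_radially_decreasing_fourth_quadrant_general
    (φ : ℝ × ℝ → ℝ)
    (hstar : ∀ p : ℝ × ℝ, p ≠ 0 →
      p.1 * fderiv ℝ φ p (1, 0) + p.2 * fderiv ℝ φ p (0, 1) > 0)
    (A : ℝ × ℝ → ℝ)
    (hA : ∀ p : ℝ × ℝ, A p = p.1 ^ 2 + p.2 ^ 2 + p.1 * p.2 * φ p)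
    (x y : ℝ) (hx : 0 < x) (hy : y < 0) (hA0 : A (x, y) < 0) :
    StrictAntiOn (fun r : ℝ => A (r * x, r * y)) (Set.Ici 1) := by
  set g : ℝ → ℝ := fun r => φ (r • (x, y))
  have hg : StrictMonoOn g (Ioi 0) := strictMonoOn_comp_smul_of_radial_fderiv_pos fun r hr => by
    have hne : r • (x, y) ≠ 0 := smul_ne_zero hr.ne' (by simp [hx.ne'])
    simpa only [← ContinuousLinearMap.apply_eq_fst_mul_add_snd_mul] using hstar _ hne
  set B : ℝ → ℝ := fun r => x ^ 2 + y ^ 2 + x * y * g r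
  have hB : StrictAntiOn B (Ici 1) := fun a ha b hb hab =>
    add_lt_add_right (mul_lt_mul_of_neg_left
      (hg (mem_Ioi.2 (zero_lt_one.trans_le ha)) (mem_Ioi.2 (zero_lt_one.trans_le hb)) hab)
      (mul_neg_of_pos_of_neg hx hy)) _
  have hB_nonpos : ∀ r ∈ Ici 1, B r ≤ 0 := fun r hr => by
    have hB1 : B 1 = A (x, y) := by simp [B, g, hA]
    linarith [hB.antitoneOn self_mem_Ici hr hr]
  have hAB : (fun r : ℝ => A (r * x, r * y)) = fun r => r ^ 2 * B r := by
    funext r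
    simp only [hA, B, g, Prod.smul_mk, smul_eq_mul]
    ring
  rw [hAB]
  exact hB.sq_mul_of_nonpos hB_nonpos fun r hr => zero_le_one.trans hr

theorem A_radially_decreasing_fourth_quadrant
    (φ : ℝ × ℝ → ℝ) (hφ : ContDiff ℝ 1 φ)
    (hstar : ∀ p : ℝ × ℝ, p ≠ 0 →
      p.1 * fderiv ℝ φ p (1, 0) + p.2 * fderiv ℝ φ p (0, 1) > 0)
    (A : ℝ × ℝ → ℝ)
    (hA : ∀ p : ℝ × ℝ, A p = p.1 ^ 2 + p.2 ^ 2 + p.1 * p.2 * φ p)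
    (x y : ℝ) (hx : 0 < x) (hy : y < 0) (hA0 : A (x, y) < 0) :
    StrictAntiOn (fun r : ℝ => A (r * x, r * y)) (Set.Ici 1) :=
  A_radially_decreasing_fourth_quadrant_general φ hstar A hA x y hx hy hA0
end

section
/- Let g ∈ C¹(ℝ,ℝ) with x·g(x) > 0 for x ≠ 0 and g'(0) > 0, and set G(x) = ∫₀ˣ g(s) ds and α(x) = sign(x)·√(2G(x)). Then α is a strictly increasing C¹ bijection of ℝ onto its image with α'(x) = sign(x)·g(x)/√(2G(x)) for x ≠ 0 and α'(0) = √(g'(0)). -/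
/-!
Since `G' = g` and `x g(x) > 0`, `G` decreases then increases, so `G > 0` off `0`, and `G` has its
minimum at `0`, whence `g 0 = 0`. Away from `0`, `α` is locally `±√(2G)` and the chain rule gives
its derivative. At `0`, L'Hôpital gives `2G(x)/x² → g'(0)`, hence `α(x)/x = √(2G(x)/x²) → √g'(0)`,
and `α'(x) = (g(x)/x) / √(2G(x)/x²) → g'(0)/√g'(0) = √g'(0)`: the derivative extends
continuously through `0`. It is positive everywhere, so `α` is strictly increasing.
-/

open Filter Topology Set Function

theorem hasDerivAt_zero_iff_tendsto_div {𝕜 : Type*} [NontriviallyNormedField 𝕜] {f : 𝕜 → 𝕜}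
    {L : 𝕜} (hf : f 0 = 0) :
    HasDerivAt f L 0 ↔ Tendsto (fun x => f x / x) (𝓝[≠] 0) (𝓝 L) := by
  simp [hasDerivAt_iff_tendsto_slope_zero, hf, div_eq_inv_mul]

theorem contDiff_one_of_hasDerivAt {𝕜 E : Type*} [NontriviallyNormedField 𝕜]
    [NormedAddCommGroup E] [NormedSpace 𝕜 E] {f f' : 𝕜 → E} (hf : ∀ x, HasDerivAt f (f' x) x)
    (hf' : Continuous f') : ContDiff 𝕜 1 f := by
  rw [contDiff_one_iff_deriv]
  exact ⟨fun x => (hf x).differentiableAt, by simpa only [funext fun x => (hf x).deriv] using hf'⟩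

theorem continuous_update_of_tendsto {X Y : Type*} [TopologicalSpace X] [T1Space X]
    [DecidableEq X] [TopologicalSpace Y] {f : X → Y} {a : X} {b : Y}
    (hf : ∀ x ≠ a, ContinuousAt f x) (hlim : Tendsto f (𝓝[≠] a) (𝓝 b)) :
    Continuous (update f a b) := by
  refine continuous_iff_continuousAt.2 fun x => ?_
  rcases eq_or_ne x a with rfl | hx
  · exact continuousAt_update_same.2 hlim
  · exact (continuousAt_update_of_ne hx).2 (hf x hx)

namespace Real

theorem sign_eventuallyEq {x : ℝ} (hx : x ≠ 0) : sign =ᶠ[𝓝 x] fun _ => sign x := by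
  rcases hx.lt_or_gt with hx | hx
  · filter_upwards [Iio_mem_nhds hx] with y hy
    rw [sign_of_neg hy, sign_of_neg hx]
  · filter_upwards [Ioi_mem_nhds hx] with y hy
    rw [sign_of_pos hy, sign_of_pos hx]

theorem sign_mul_sqrt_div_self (a x : ℝ) : sign x * √a / x = √(a / x ^ 2) := by
  rw [sqrt_div' a (sq_nonneg x), sqrt_sq_eq_abs]
  rcases lt_trichotomy x 0 with hx | rfl | hx
  · rw [sign_of_neg hx, abs_of_neg hx]; ring
  · simp
  · rw [sign_of_pos hx, abs_of_pos hx]; ring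

theorem sign_mul_div_sqrt {x : ℝ} (hx : x ≠ 0) (a y : ℝ) :
    sign x * y / √a = y / x / √(a / x ^ 2) := by
  rw [← sign_mul_sqrt_div_self]
  rcases hx.lt_or_gt with hx | hx
  · rw [sign_of_neg hx]; field_simp
  · rw [sign_of_pos hx]; field_simp

theorem sign_mul_pos_of_mul_pos {x y : ℝ} (h : 0 < x * y) : 0 < sign x * y := by
  rcases lt_trichotomy x 0 with hx | rfl | hx
  · rw [sign_of_neg hx, neg_one_mul, neg_pos]
    exact neg_of_mul_pos_right h hx.le
  · simp at h
  · rw [sign_of_pos hx, one_mul]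
    exact pos_of_mul_pos_right h hx.le

end Real

open Real

section Primitive

variable {g G : ℝ → ℝ}

theorem pos_of_hasDerivAt_of_mul_pos (hG : ∀ x, HasDerivAt G (g x) x)
    (hsign : ∀ x, x ≠ 0 → 0 < x * g x) (hG0 : G 0 = 0) {x : ℝ} (hx : x ≠ 0) : 0 < G x := by
  have hGc : Continuous G := continuous_iff_continuousAt.2 fun y => (hG y).continuousAt
  rcases hx.lt_or_gt with hx | hx
  · have hanti : StrictAntiOn G (Iic 0) :=
      strictAntiOn_of_hasDerivWithinAt_neg (convex_Iic 0) hGc.continuousOn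
        (fun y _ => (hG y).hasDerivWithinAt) fun y hy => by
          rw [interior_Iic] at hy
          exact neg_of_mul_pos_right (hsign y hy.ne) hy.le
    simpa [hG0] using hanti hx.le (mem_Iic.2 le_rfl) hx
  · have hmono : StrictMonoOn G (Ici 0) :=
      strictMonoOn_of_hasDerivWithinAt_pos (convex_Ici 0) hGc.continuousOn
        (fun y _ => (hG y).hasDerivWithinAt) fun y hy => by
          rw [interior_Ici] at hy
          exact pos_of_mul_pos_right (hsign y hy.ne') hy.le
    simpa [hG0] using hmono (mem_Ici.2 le_rfl) hx.le hx

theorem eq_zero_of_hasDerivAt_of_mul_pos (hG : ∀ x, HasDerivAt G (g x) x)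
    (hsign : ∀ x, x ≠ 0 → 0 < x * g x) (hG0 : G 0 = 0) : g 0 = 0 := by
  refine IsLocalMin.hasDerivAt_eq_zero (Eventually.of_forall fun x => ?_) (hG 0)
  rcases eq_or_ne x 0 with rfl | hx
  · exact le_rfl
  · simpa [hG0] using (pos_of_hasDerivAt_of_mul_pos hG hsign hG0 hx).le

theorem tendsto_two_mul_div_sq_of_hasDerivAt {d : ℝ} (hG : ∀ x, HasDerivAt G (g x) x)
    (hG0 : G 0 = 0) (hg0 : g 0 = 0) (hgd : HasDerivAt g d 0) :
    Tendsto (fun x => 2 * G x / x ^ 2) (𝓝[≠] 0) (𝓝 d) := by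
  refine HasDerivAt.lhopital_zero_nhdsNE (f' := fun x => 2 * g x) (g' := fun x => 2 * x)
    (Eventually.of_forall fun x => (hG x).const_mul 2)
    (Eventually.of_forall fun x => by simpa using hasDerivAt_pow 2 x)
    (eventually_nhdsWithin_of_forall fun x hx => by simpa using hx) ?_ ?_ ?_
  · simpa [hG0] using ((hG 0).continuousAt.const_mul 2).tendsto.mono_left nhdsWithin_le_nhds
  · simpa using ((continuous_pow 2).tendsto (0 : ℝ)).mono_left nhdsWithin_le_nhds
  · simpa only [mul_div_mul_left _ _ (two_ne_zero' ℝ)] using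
      (hasDerivAt_zero_iff_tendsto_div hg0).1 hgd

end Primitive

section SignedSqrt

variable {g G : ℝ → ℝ} {d : ℝ}

theorem hasDerivAt_sign_mul_sqrt {x : ℝ} (hG : HasDerivAt G (g x) x) (hx : x ≠ 0)
    (hGx : 0 < G x) :
    HasDerivAt (fun y => sign y * √(2 * G y)) (sign x * g x / √(2 * G x)) x := by
  have h := ((hG.const_mul 2).sqrt (by positivity)).const_mul (sign x)
  refine (h.congr_of_eventuallyEq ?_).congr_deriv ?_
  · filter_upwards [sign_eventuallyEq hx] with y hy
    rw [hy]
  · field_simp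

theorem continuousAt_sign_mul_div_sqrt {x : ℝ} (hg : ContinuousAt g x) (hG : ContinuousAt G x)
    (hx : x ≠ 0) (hGx : 0 < G x) :
    ContinuousAt (fun y => sign y * g y / √(2 * G y)) x := by
  have h : ContinuousAt (fun y => sign x * g y / √(2 * G y)) x :=
    (continuousAt_const.mul hg).div (continuous_sqrt.continuousAt.comp (continuousAt_const.mul hG))
      (by positivity)
  refine h.congr ?_
  filter_upwards [sign_eventuallyEq hx] with y hy
  rw [hy]

theorem hasDerivAt_zero_sign_mul_sqrt (h2G : Tendsto (fun x => 2 * G x / x ^ 2) (𝓝[≠] 0) (𝓝 d)) :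
    HasDerivAt (fun y => sign y * √(2 * G y)) (√d) 0 :=
  (hasDerivAt_zero_iff_tendsto_div (by simp)).2 <| by
    simpa only [sign_mul_sqrt_div_self] using h2G.sqrt

theorem tendsto_sign_mul_div_sqrt (hg : Tendsto (fun x => g x / x) (𝓝[≠] 0) (𝓝 d))
    (h2G : Tendsto (fun x => 2 * G x / x ^ 2) (𝓝[≠] 0) (𝓝 d)) (hd : 0 < d) :
    Tendsto (fun x => sign x * g x / √(2 * G x)) (𝓝[≠] 0) (𝓝 (√d)) := by
  have h := hg.div h2G.sqrt (sqrt_pos.2 hd).ne'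
  rw [div_sqrt] at h
  refine h.congr' ?_
  filter_upwards [self_mem_nhdsWithin] with x hx
  exact (sign_mul_div_sqrt hx _ _).symm

end SignedSqrt

theorem conti_filippov_alpha
    (g : ℝ → ℝ) (hg : ContDiff ℝ 1 g)
    (hsign : ∀ x : ℝ, x ≠ 0 → 0 < x * g x)
    (hg0 : 0 < deriv g 0)
    (G : ℝ → ℝ) (hG : ∀ x : ℝ, G x = ∫ s in (0 : ℝ)..x, g s)
    (α : ℝ → ℝ)
    (hα : ∀ x : ℝ, α x = Real.sign x * Real.sqrt (2 * G x)) :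
    StrictMono α ∧ ContDiff ℝ 1 α ∧ Function.Injective α
      ∧ (∀ x : ℝ, x ≠ 0 →
          HasDerivAt α (Real.sign x * g x / Real.sqrt (2 * G x)) x)
      ∧ HasDerivAt α (Real.sqrt (deriv g 0)) 0 := by
  obtain rfl : α = fun x => sign x * √(2 * G x) := funext hα
  have hgc : Continuous g := hg.continuous
  have hGd (x : ℝ) : HasDerivAt G (g x) x := by
    simpa only [← funext hG] using (hgc.integral_hasStrictDerivAt 0 x).hasDerivAt
  have hG0 : G 0 = 0 := by simp [hG]
  have hGpos (x : ℝ) (hx : x ≠ 0) : 0 < G x := pos_of_hasDerivAt_of_mul_pos hGd hsign hG0 hx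
  have hgd : HasDerivAt g (deriv g 0) 0 := (hg.differentiable one_ne_zero 0).hasDerivAt
  have hg_zero : g 0 = 0 := eq_zero_of_hasDerivAt_of_mul_pos hGd hsign hG0
  have hlim := tendsto_two_mul_div_sq_of_hasDerivAt hGd hG0 hg_zero hgd
  set α' := update (fun x => sign x * g x / √(2 * G x)) 0 (√(deriv g 0))
  have hα' (x : ℝ) : HasDerivAt (fun x => sign x * √(2 * G x)) (α' x) x := by
    rcases eq_or_ne x 0 with rfl | hx
    · simpa [α'] using hasDerivAt_zero_sign_mul_sqrt hlim
    · simpa [α', hx] using hasDerivAt_sign_mul_sqrt (hGd x) hx (hGpos x hx)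
  have hα'pos (x : ℝ) : 0 < α' x := by
    rcases eq_or_ne x 0 with rfl | hx
    · simpa [α'] using hg0
    · have h2G : 0 < 2 * G x := by linarith [hGpos x hx]
      simpa [α', hx] using div_pos (sign_mul_pos_of_mul_pos (hsign x hx)) (sqrt_pos.2 h2G)
  have hα'c : Continuous α' :=
    continuous_update_of_tendsto
      (fun x hx => continuousAt_sign_mul_div_sqrt hgc.continuousAt (hGd x).continuousAt hx
        (hGpos x hx))
      (tendsto_sign_mul_div_sqrt ((hasDerivAt_zero_iff_tendsto_div hg_zero).1 hgd) hlim hg0)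
  have hmono := strictMono_of_hasDerivAt_pos hα' hα'pos
  refine ⟨hmono, contDiff_one_of_hasDerivAt hα' hα'c, hmono.injective, fun x hx => ?_, ?_⟩
  · simpa [α', hx] using hα' x
  · simpa [α'] using hα' 0
end
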